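/- arXiv:2109.09357 — 6 statements merged into one kernel-verified Lean document; each statement's English description precedes it below -/
import Mathlib

section
/- Suppose s > 0, θ ≥ 1, η ∈ (0,1], and λ(1-η) > s(θ+1). Then the function p(x) = x^{(λ/s)(1-η) - θ - 1} (1-x)^{θ-1} exp(-ληx/s) on (0,1) attains its maximum at x̂ = (λ - 2s - √((λ-2s)² - 4λη[λ(1-η) - s(θ+1)]))/(2λη), and the quantity under the square root is nonnegative. -/
open Set Real

/-!
With `a = (λ/s)(1-η) - θ - 1 > 0`, `b = θ - 1 ≥ 0` and `c = λη/s > 0` the density is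
`x^a (1-x)^b e^{-cx}`, whose derivative on `(0,1)` is a positive factor times the quadratic
`q(x) = c x² - (a+b+c) x + a`. Since `q(0) = a > 0` and `q(1) = -b ≤ 0`, the smaller root of `q`
lies in `(0,1]` and the larger one in `[1,∞)`, so the density increases up to the smaller root and
decreases after it. Rescaling by `s` turns that root into the paper's `x̂`.
-/

namespace BetaExp

noncomputable def density (a b c x : ℝ) : ℝ := x ^ a * (1 - x) ^ b * exp (-(c * x))

/-- The smaller root of `c x² - (a+b+c) x + a`. -/
noncomputable def mode (a b c : ℝ) : ℝ :=
  (a + b + c - √((a + b + c) ^ 2 - 4 * a * c)) / (2 * c)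

lemma hasDerivAt_density (a b c : ℝ) {x : ℝ} (hx0 : 0 < x) (hx1 : x < 1) :
    HasDerivAt (density a b c)
      (x ^ (a - 1) * (1 - x) ^ (b - 1) * exp (-(c * x)) * (c * x ^ 2 - (a + b + c) * x + a)) x := by
  have hx1' : 0 < 1 - x := sub_pos.2 hx1
  have hpow : HasDerivAt (fun y : ℝ => y ^ a) (a * x ^ (a - 1)) x :=
    hasDerivAt_rpow_const (Or.inl hx0.ne')
  have hpow' : HasDerivAt (fun y : ℝ => (1 - y) ^ b) (b * (1 - x) ^ (b - 1) * (-1)) x :=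
    (hasDerivAt_rpow_const (Or.inl hx1'.ne')).comp x ((hasDerivAt_id x).const_sub 1)
  have hexp : HasDerivAt (fun y : ℝ => exp (-(c * y))) (exp (-(c * x)) * (-c)) x := by
    simpa using (((hasDerivAt_id' x).const_mul c).fun_neg).exp
  refine ((hpow.mul hpow').mul hexp).congr_deriv ?_
  have hxa : x ^ a = x ^ (a - 1) * x := by rw [← rpow_add_one hx0.ne', sub_add_cancel]
  have hxb : (1 - x) ^ b = (1 - x) ^ (b - 1) * (1 - x) := by
    rw [← rpow_add_one hx1'.ne', sub_add_cancel]
  simp only [Pi.mul_apply, hxa, hxb]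
  ring

lemma continuous_density {a b : ℝ} (ha : 0 ≤ a) (hb : 0 ≤ b) (c : ℝ) :
    Continuous (density a b c) :=
  ((continuous_rpow_const ha).mul ((continuous_rpow_const hb).comp (continuous_sub_left 1))).mul
    (continuous_exp.comp (continuous_const.mul continuous_id).neg)

lemma quadratic_eq_mul_sub_mul_sub {c S a r : ℝ} (hc : c ≠ 0) (hr : r ^ 2 = S ^ 2 - 4 * a * c)
    (x : ℝ) :
    c * x ^ 2 - S * x + a = c * (x - (S - r) / (2 * c)) * (x - (S + r) / (2 * c)) := by
  field_simp
  linear_combination hr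

section Roots

variable {a b c : ℝ}

lemma discrim_nonneg (ha : 0 ≤ a) (hb : 0 ≤ b) (hc : 0 ≤ c) : 0 ≤ (a + b + c) ^ 2 - 4 * a * c := by
  nlinarith [sq_nonneg (a - c), mul_nonneg hb (add_nonneg ha hc)]

lemma abs_sub_le_sqrt_discrim (hb : 0 ≤ b) (hc : 0 ≤ c) :
    |a + b + c - 2 * c| ≤ √((a + b + c) ^ 2 - 4 * a * c) :=
  abs_le_sqrt (by nlinarith [mul_nonneg hb hc])

lemma sqrt_discrim_lt (ha : 0 < a) (hb : 0 ≤ b) (hc : 0 < c) :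
    √((a + b + c) ^ 2 - 4 * a * c) < a + b + c :=
  (sqrt_lt' (by positivity)).2 (by nlinarith [mul_pos ha hc])

lemma mode_pos (ha : 0 < a) (hb : 0 ≤ b) (hc : 0 < c) : 0 < mode a b c :=
  div_pos (sub_pos.2 (sqrt_discrim_lt ha hb hc)) (by positivity)

lemma mode_le_one (hb : 0 ≤ b) (hc : 0 < c) : mode a b c ≤ 1 := by
  have := (abs_le.1 (abs_sub_le_sqrt_discrim (a := a) hb hc.le)).2
  rw [mode, div_le_one (by positivity)]
  linarith

lemma one_le_largeRoot (hb : 0 ≤ b) (hc : 0 < c) :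
    1 ≤ (a + b + c + √((a + b + c) ^ 2 - 4 * a * c)) / (2 * c) := by
  have := (abs_le.1 (abs_sub_le_sqrt_discrim (a := a) hb hc.le)).1
  rw [one_le_div (by positivity)]
  linarith

end Roots

theorem isMaxOn_density {a b c : ℝ} (ha : 0 < a) (hb : 0 ≤ b) (hc : 0 < c) :
    IsMaxOn (density a b c) (Icc 0 1) (mode a b c) := by
  set S := a + b + c
  set t := mode a b c
  set t' := (S + √(S ^ 2 - 4 * a * c)) / (2 * c)
  have hfac (x : ℝ) : c * x ^ 2 - S * x + a = c * (x - t) * (x - t') :=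
    quadratic_eq_mul_sub_mul_sub hc.ne' (sq_sqrt (discrim_nonneg ha.le hb hc.le)) x
  have ht0 := mode_pos ha hb hc
  have ht1 : t ≤ 1 := mode_le_one hb hc
  have ht' : 1 ≤ t' := one_le_largeRoot hb hc
  have hderiv {x : ℝ} (hx : x ∈ Ioo 0 1) := hasDerivAt_density a b c hx.1 hx.2
  have hweight {x : ℝ} (hx : x ∈ Ioo 0 1) :
      0 ≤ x ^ (a - 1) * (1 - x) ^ (b - 1) * exp (-(c * x)) := by
    have : 0 ≤ 1 - x := sub_nonneg.2 hx.2.le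
    have : 0 ≤ x := hx.1.le
    positivity
  have hdiff : DifferentiableOn ℝ (density a b c) (Ioo 0 1) :=
    fun x hx => (hderiv hx).differentiableAt.differentiableWithinAt
  have hcont := continuous_density ha.le hb c
  refine isMaxOn_Icc_of_deriv hcont.continuousAt hcont.continuousAt hcont.continuousAt
    (hdiff.mono (Ioo_subset_Ioo_right ht1)) (hdiff.mono (Ioo_subset_Ioo_left ht0.le)) ?_ ?_
  · intro x hx
    have hx' : x ∈ Ioo 0 1 := ⟨hx.1, hx.2.trans_le ht1⟩
    rw [(hderiv hx').deriv, hfac]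
    refine mul_nonneg (hweight hx') (mul_nonneg_of_nonpos_of_nonpos ?_ ?_)
    · exact mul_nonpos_of_nonneg_of_nonpos hc.le (by linarith [hx.2])
    · linarith [hx'.2]
  · intro x hx
    have hx' : x ∈ Ioo 0 1 := ⟨ht0.trans hx.1, hx.2⟩
    rw [(hderiv hx').deriv, hfac]
    refine mul_nonpos_of_nonneg_of_nonpos (hweight hx') (mul_nonpos_of_nonneg_of_nonpos ?_ ?_)
    · exact mul_nonneg hc.le (by linarith [hx.1])
    · linarith [hx.2]

end BetaExp

open BetaExp in
/-- For `s > 0`, `θ ≥ 1`, `η ∈ (0,1]` and `λ(1-η) > s(θ+1)`, the steady-state density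
`p(x) = x^{(λ/s)(1-η)-θ-1}(1-x)^{θ-1}exp(-ληx/s)` attains its maximum over `[0,1]` at
`x̂ = (λ - 2s - √((λ-2s)² - 4λη[λ(1-η)-s(θ+1)]))/(2λη)`, the discriminant being nonnegative. -/
theorem stmt_3 (s θ η lam : ℝ) (hs : 0 < s) (hθ : 1 ≤ θ) (hη0 : 0 < η) (hη1 : η ≤ 1)
    (hlam : lam * (1 - η) > s * (θ + 1)) :
    0 ≤ (lam - 2*s)^2 - 4*lam*η*(lam*(1-η) - s*(θ+1)) ∧
    (lam - 2*s - Real.sqrt ((lam - 2*s)^2 - 4*lam*η*(lam*(1-η) - s*(θ+1)))) / (2*lam*η)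
      ∈ Icc (0:ℝ) 1 ∧
    ∀ x ∈ Icc (0:ℝ) 1,
      x ^ ((lam/s)*(1-η) - θ - 1) * (1-x) ^ (θ-1) * Real.exp (-(lam*η*x)/s)
        ≤ ((lam - 2*s - Real.sqrt ((lam - 2*s)^2 - 4*lam*η*(lam*(1-η) - s*(θ+1)))) / (2*lam*η))
            ^ ((lam/s)*(1-η) - θ - 1)
          * (1 - (lam - 2*s - Real.sqrt ((lam - 2*s)^2 - 4*lam*η*(lam*(1-η) - s*(θ+1)))) / (2*lam*η))
            ^ (θ-1)
          * Real.exp (-(lam*η*((lam - 2*s - Real.sqrt ((lam - 2*s)^2 - 4*lam*η*(lam*(1-η) - s*(θ+1)))) / (2*lam*η)))/s) := by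
  have hlam0 : 0 < lam :=
    pos_of_mul_pos_left (hlam.trans' (by positivity)) (sub_nonneg.2 hη1)
  have ha : 0 < lam / s * (1 - η) - θ - 1 := by
    rw [show lam / s * (1 - η) - θ - 1 = (lam * (1 - η) - s * (θ + 1)) / s by field_simp; ring]
    exact div_pos (sub_pos.2 hlam) hs
  have hb : 0 ≤ θ - 1 := sub_nonneg.2 hθ
  have hc : 0 < lam * η / s := by positivity
  set a := lam / s * (1 - η) - θ - 1
  set c := lam * η / s
  have hdiscrim : (lam - 2*s)^2 - 4*lam*η*(lam*(1-η) - s*(θ+1))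
      = s ^ 2 * ((a + (θ - 1) + c) ^ 2 - 4 * a * c) := by
    simp only [a, c]; field_simp; ring
  have hmode : (lam - 2*s - √((lam - 2*s)^2 - 4*lam*η*(lam*(1-η) - s*(θ+1)))) / (2*lam*η)
      = mode a (θ - 1) c := by
    rw [hdiscrim, sqrt_mul (sq_nonneg s), sqrt_sq hs.le, mode]
    simp only [a, c]; field_simp; ring
  have hdensity (x : ℝ) : x ^ a * (1 - x) ^ (θ - 1) * exp (-(lam * η * x) / s)
      = density a (θ - 1) c x := by
    rw [density, neg_div, mul_div_right_comm]
  refine ⟨hdiscrim ▸ mul_nonneg (sq_nonneg s) (discrim_nonneg ha.le hb hc.le),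
    hmode ▸ ⟨(mode_pos ha hb hc).le, mode_le_one hb hc⟩, fun x hx => ?_⟩
  rw [hmode, hdensity, hdensity]
  exact isMaxOn_density ha hb hc hx
end

section
/- Let s > 0, θ ≥ 1, η ∈ (0,1]. Define x̂(λ) = (λ - 2s - √((λ-2s)² - 4λη[λ(1-η) - s(θ+1)]))/(2λη) for λ sufficiently large that λ(1-η) > s(θ+1) (or for all large λ when η = 1). Then lim_{λ→∞} x̂(λ) = 1 if η < 1/2 and lim_{λ→∞} x̂(λ) = 1/η - 1 if η ≥ 1/2. -/
open Filter Topology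

/-!
After substituting `t = 1/λ`, `x̂` becomes a continuous function of `t` near `0`. At `t = 0`
the discriminant is the perfect square `(1 - 2η)²`, so the limit is `(1 - |1 - 2η|) / (2η)`,
and the sign of `1 - 2η` separates the two cases.
-/

/-- The rescaled root `x̂(1/t)`, with `a = 2s` and `b = s(θ+1)`. -/
noncomputable def rescaledRoot (a b η t : ℝ) : ℝ :=
  ((1 - a*t) - Real.sqrt ((1 - a*t)^2 - 4*η*((1-η) - b*t))) / (2*η)

lemma continuous_rescaledRoot (a b η : ℝ) : Continuous (rescaledRoot a b η) := by
  unfold rescaledRoot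
  fun_prop

lemma rescaledRoot_zero (a b η : ℝ) :
    rescaledRoot a b η 0 = (1 - |1 - 2*η|) / (2*η) := by
  have hdisc : (1 - a*0)^2 - 4*η*((1-η) - b*0) = (1 - 2*η)^2 := by ring
  rw [rescaledRoot, hdisc, Real.sqrt_sq_eq_abs, mul_zero, sub_zero]

lemma rescaledRoot_inv {a b η lam : ℝ} (hη : η ≠ 0) (hlam : 0 < lam) :
    rescaledRoot a b η lam⁻¹ =
      (lam - a - Real.sqrt ((lam - a)^2 - 4*lam*η*(lam*(1-η) - b))) / (2*lam*η) := by
  set D := (lam - a)^2 - 4*lam*η*(lam*(1-η) - b)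
  have hdisc : (1 - a*lam⁻¹)^2 - 4*η*((1-η) - b*lam⁻¹) = D * (lam⁻¹)^2 := by
    field_simp
    ring
  have hsqrt : Real.sqrt (D * (lam⁻¹)^2) = Real.sqrt D * lam⁻¹ := by
    rw [Real.sqrt_mul' D (sq_nonneg _), Real.sqrt_sq (inv_nonneg.mpr hlam.le)]
  rw [rescaledRoot, hdisc, hsqrt, div_eq_div_iff (by simp [hη]) (by simp [hη, hlam.ne'])]
  field_simp

lemma tendsto_modalRoot_atTop (a b : ℝ) {η : ℝ} (hη : η ≠ 0) :
    Tendsto (fun lam : ℝ =>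
        (lam - a - Real.sqrt ((lam - a)^2 - 4*lam*η*(lam*(1-η) - b))) / (2*lam*η))
      atTop (𝓝 ((1 - |1 - 2*η|) / (2*η))) := by
  have hlim : Tendsto (fun lam : ℝ => rescaledRoot a b η lam⁻¹) atTop
      (𝓝 ((1 - |1 - 2*η|) / (2*η))) := by
    rw [← rescaledRoot_zero a b η]
    exact (continuous_rescaledRoot a b η).continuousAt.tendsto.comp tendsto_inv_atTop_zero
  refine hlim.congr' ?_
  filter_upwards [eventually_gt_atTop (0:ℝ)] with lam hlam
  exact rescaledRoot_inv hη hlam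

lemma one_sub_abs_div_of_lt_half {η : ℝ} (hη : η ≠ 0) (h : η < 1/2) :
    (1 - |1 - 2*η|) / (2*η) = 1 := by
  rw [abs_of_nonneg (by linarith)]
  field_simp
  ring

lemma one_sub_abs_div_of_half_le {η : ℝ} (hη : η ≠ 0) (h : 1/2 ≤ η) :
    (1 - |1 - 2*η|) / (2*η) = 1/η - 1 := by
  rw [abs_of_nonpos (by linarith)]
  field_simp
  ring

theorem stmt_4_general (s θ η : ℝ) (hη0 : 0 < η) :
    (η < 1/2 → Tendsto (fun lam : ℝ =>
        (lam - 2*s - Real.sqrt ((lam - 2*s)^2 - 4*lam*η*(lam*(1-η) - s*(θ+1)))) / (2*lam*η))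
      atTop (𝓝 1)) ∧
    (1/2 ≤ η → Tendsto (fun lam : ℝ =>
        (lam - 2*s - Real.sqrt ((lam - 2*s)^2 - 4*lam*η*(lam*(1-η) - s*(θ+1)))) / (2*lam*η))
      atTop (𝓝 (1/η - 1))) := by
  have hlim := tendsto_modalRoot_atTop (2*s) (s*(θ+1)) hη0.ne'
  refine ⟨fun h => ?_, fun h => ?_⟩
  · rwa [one_sub_abs_div_of_lt_half hη0.ne' h] at hlim
  · rwa [one_sub_abs_div_of_half_le hη0.ne' h] at hlim

/-- Large-λ limit of the modal composition
`x̂(λ) = (λ - 2s - √((λ-2s)² - 4λη[λ(1-η)-s(θ+1)]))/(2λη)`: it tends to `1` when `η < 1/2`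
and to `1/η - 1` when `η ≥ 1/2`. -/
theorem stmt_4 (s θ η : ℝ) (hs : 0 < s) (hθ : 1 ≤ θ) (hη0 : 0 < η) (hη1 : η ≤ 1) :
    (η < 1/2 → Tendsto (fun lam : ℝ =>
        (lam - 2*s - Real.sqrt ((lam - 2*s)^2 - 4*lam*η*(lam*(1-η) - s*(θ+1)))) / (2*lam*η))
      atTop (𝓝 1)) ∧
    (1/2 ≤ η → Tendsto (fun lam : ℝ =>
        (lam - 2*s - Real.sqrt ((lam - 2*s)^2 - 4*lam*η*(lam*(1-η) - s*(θ+1)))) / (2*lam*η))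
      atTop (𝓝 (1/η - 1))) :=
  stmt_4_general s θ η hη0
end

section
/- Consider the planar ODE system dx/dt = x[b_S - b_D + (b_D - b_S)x + (b_D - b_F)y], dy/dt = y[b_F - b_D + (b_D - b_S)x + (b_D - b_F)y] with b_F > b_S > b_D. If the initial condition (x₀, y₀) satisfies x₀ ≥ 0, y₀ > 0, x₀ + y₀ ≤ 1, then the solution satisfies y(t) → 1 and x(t) → 0 as t → ∞. -/
open Filter Topology Real

/-! The system is replicator dynamics with constant fitnesses `bS`, `bF`, `bD`: with
`z = 1 - x - y` and mean fitness `φ = bS x + bF y + bD z`, each share `u` obeys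
`u' = u (b_u - φ)`, so it equals `u 0 * exp (b_u t)` times the common factor `exp (-∫₀ᵗ φ)`.
As the shares sum to `1`, `x_i t = x_i 0 * exp (b_i t) / ∑ⱼ x_j 0 * exp (b_j t)`; dividing by
`exp (bF t)` shows that the fastest replicator takes over as soon as `y 0 ≠ 0`. -/

theorem eq_mul_exp_sub_of_hasDerivAt {f c C : ℝ → ℝ} (hC : ∀ t, HasDerivAt C (c t) t)
    (hf : ∀ t, HasDerivAt f (f t * c t) t) (t : ℝ) : f t = f 0 * exp (C t - C 0) := by
  have hconst : ∀ s, HasDerivAt (fun s => f s * exp (-C s)) 0 s := fun s =>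
    ((hf s).fun_mul (hC s).fun_neg.exp).congr_deriv (by ring)
  have h := is_const_of_deriv_eq_zero (fun s => (hconst s).differentiableAt)
    (fun s => (hconst s).deriv) t 0
  calc f t = f t * exp (-C t) * exp (C t) := by rw [mul_assoc, ← exp_add]; simp
    _ = f 0 * exp (-C 0) * exp (C t) := by rw [h]
    _ = f 0 * exp (C t - C 0) := by rw [mul_assoc, ← exp_add, neg_add_eq_sub]

theorem eq_mul_exp_mul_exp_neg_integral {f φ : ℝ → ℝ} {b : ℝ} (hφ : Continuous φ)
    (hf : ∀ t, HasDerivAt f (f t * (b - φ t)) t) (t : ℝ) :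
    f t = f 0 * exp (b * t) * exp (-∫ s in (0 : ℝ)..t, φ s) := by
  have hC (t : ℝ) : HasDerivAt (fun t => b * t - ∫ s in (0 : ℝ)..t, φ s) (b - φ t) t := by
    simpa using
      ((hasDerivAt_id t).const_mul b).fun_sub (hφ.integral_hasStrictDerivAt 0 t).hasDerivAt
  rw [eq_mul_exp_sub_of_hasDerivAt hC hf t, mul_assoc, ← exp_add]
  simp [sub_eq_add_neg]

theorem tendsto_exp_mul_div_exp_mul_atTop {r s : ℝ} (h : r < s) :
    Tendsto (fun t => exp (r * t) / exp (s * t)) atTop (𝓝 0) := by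
  simp_rw [← exp_sub, ← sub_mul]
  exact tendsto_exp_atBot.comp <| (tendsto_const_mul_atBot_of_neg (sub_neg.2 h)).2 tendsto_id

theorem tendsto_sum_mul_exp_div_exp_atTop {a b c r s u : ℝ} (hr : r < s) (hu : u < s) :
    Tendsto (fun t => (a * exp (r * t) + b * exp (s * t) + c * exp (u * t)) / exp (s * t))
      atTop (𝓝 b) := by
  have h := (((tendsto_exp_mul_div_exp_mul_atTop hr).const_mul a).add_const b).add
    ((tendsto_exp_mul_div_exp_mul_atTop hu).const_mul c)
  simp only [mul_zero, zero_add, add_zero] at h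
  refine h.congr fun t => ?_
  field_simp

noncomputable def expWeightSum (bS bF bD x₀ y₀ t : ℝ) : ℝ :=
  x₀ * exp (bS * t) + y₀ * exp (bF * t) + (1 - x₀ - y₀) * exp (bD * t)

theorem replicator_eq_mul_exp_div_expWeightSum {bS bF bD : ℝ} {x y : ℝ → ℝ}
    (hx : ∀ t : ℝ, HasDerivAt x (x t * (bS - bD + (bD - bS) * x t + (bD - bF) * y t)) t)
    (hy : ∀ t : ℝ, HasDerivAt y (y t * (bF - bD + (bD - bS) * x t + (bD - bF) * y t)) t)
    (t : ℝ) :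
    x t = x 0 * exp (bS * t) / expWeightSum bS bF bD (x 0) (y 0) t ∧
      y t = y 0 * exp (bF * t) / expWeightSum bS bF bD (x 0) (y 0) t := by
  have hxc : Continuous x := continuous_iff_continuousAt.2 fun t => (hx t).continuousAt
  have hyc : Continuous y := continuous_iff_continuousAt.2 fun t => (hy t).continuousAt
  set φ : ℝ → ℝ := fun t => bD + (bS - bD) * x t + (bF - bD) * y t
  have hφ : Continuous φ := by fun_prop
  have hxW := eq_mul_exp_mul_exp_neg_integral hφ (b := bS)
    (fun t => (hx t).congr_deriv (by ring)) t
  have hyW := eq_mul_exp_mul_exp_neg_integral hφ (b := bF)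
    (fun t => (hy t).congr_deriv (by ring)) t
  have hzW := eq_mul_exp_mul_exp_neg_integral hφ (f := fun t => 1 - x t - y t) (b := bD)
    (fun t => (((hasDerivAt_const t 1).sub (hx t)).sub (hy t)).congr_deriv (by ring)) t
  set W := exp (-∫ s in (0 : ℝ)..t, φ s)
  have hWN : W * expWeightSum bS bF bD (x 0) (y 0) t = 1 := by
    unfold expWeightSum
    linear_combination -hxW - hyW - hzW
  have hN := right_ne_zero_of_mul_eq_one hWN
  constructor
  · rw [hxW, eq_div_iff hN, mul_assoc, hWN, mul_one]
  · rw [hyW, eq_div_iff hN, mul_assoc, hWN, mul_one]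

theorem stmt_7_general (bS bF bD : ℝ) (hFS : bF > bS) (hSD : bS > bD)
    (x y : ℝ → ℝ)
    (hx : ∀ t : ℝ, HasDerivAt x (x t * (bS - bD + (bD - bS) * x t + (bD - bF) * y t)) t)
    (hy : ∀ t : ℝ, HasDerivAt y (y t * (bF - bD + (bD - bS) * x t + (bD - bF) * y t)) t)
    (hy0 : 0 < y 0) :
    Tendsto y atTop (𝓝 1) ∧ Tendsto x atTop (𝓝 0) := by
  have hN : Tendsto (fun t => expWeightSum bS bF bD (x 0) (y 0) t / exp (bF * t)) atTop
      (𝓝 (y 0)) :=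
    tendsto_sum_mul_exp_div_exp_atTop hFS (hSD.trans hFS)
  have hsol := replicator_eq_mul_exp_div_expWeightSum hx hy
  constructor
  · have h := (tendsto_const_nhds (x := y 0)).div hN hy0.ne'
    rw [div_self hy0.ne'] at h
    refine h.congr fun t => ?_
    rw [Pi.div_apply, (hsol t).2, div_div_eq_mul_div]
  · have h := ((tendsto_exp_mul_div_exp_mul_atTop hFS).const_mul (x 0)).div hN hy0.ne'
    rw [mul_zero, zero_div] at h
    refine h.congr fun t => ?_
    rw [Pi.div_apply, (hsol t).1, div_div_eq_mul_div, mul_assoc,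
      div_mul_cancel₀ _ (exp_pos _).ne']

/-- Global stability of the all-fast equilibrium for the within-protocell replicator ODE:
for `b_F > b_S > b_D` and initial condition `x₀ ≥ 0`, `y₀ > 0`, `x₀ + y₀ ≤ 1`,
solutions satisfy `y(t) → 1` and `x(t) → 0` as `t → ∞`. -/
theorem stmt_7 (bS bF bD : ℝ) (hFS : bF > bS) (hSD : bS > bD)
    (x y : ℝ → ℝ)
    (hx : ∀ t : ℝ, HasDerivAt x (x t * (bS - bD + (bD - bS) * x t + (bD - bF) * y t)) t)
    (hy : ∀ t : ℝ, HasDerivAt y (y t * (bF - bD + (bD - bS) * x t + (bD - bF) * y t)) t)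
    (hx0 : 0 ≤ x 0) (hy0 : 0 < y 0) (hsum : x 0 + y 0 ≤ 1) :
    Tendsto y atTop (𝓝 1) ∧ Tendsto x atTop (𝓝 0) :=
  stmt_7_general bS bF bD hFS hSD x y hx hy hy0
end

section
/- Consider the ODE dy/dt = y[b_F(1-y) + b_D(x+y-1) - b_S x] where 0 ≤ x ≤ 1-y and b_F > b_S > b_D. Then dy/dt ≥ (b_F - b_S) y (1-y); consequently if w solves the logistic equation dw/dt = (b_F - b_S) w(1-w) with w(0) = y(0), then y(t) ≥ w(t) for all t ≥ 0. -/
/-!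
The first claim is the identity
`y (b_F(1-y) + b_D(x+y-1) - b_S x) - (b_F - b_S) y (1-y) = (b_S - b_D) y (1 - x - y) ≥ 0`.
For the comparison, `d = w - y` satisfies `d' ≤ c (w(1-w) - y(1-y)) = c d (1 - w - y)`, and where
`d > 0` we have `w + y ≥ 0`, hence `d' ≤ c d`. A function that starts nonpositive and grows at most
linearly in itself while positive stays nonpositive, by fencing it below `ε e^{(c+1)(s-t)}`.
-/

open Set Real

theorem nonpos_of_deriv_le_mul_of_pos {d d' : ℝ → ℝ} {a b K : ℝ}
    (hd : ContinuousOn d (Icc a b)) (hd' : ∀ s ∈ Ico a b, HasDerivWithinAt d (d' s) (Ici s) s)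
    (ha : d a ≤ 0) (hK : ∀ s ∈ Ico a b, 0 < d s → d' s ≤ K * d s) :
    ∀ s ∈ Icc a b, d s ≤ 0 := by
  intro s hs
  refine le_of_forall_gt_imp_ge_of_dense fun ε hε => ?_
  have hB : ∀ r, HasDerivAt (fun r => ε * exp ((K + 1) * (r - s)))
      (ε * (exp ((K + 1) * (r - s)) * (K + 1))) r := fun r =>
    ((((hasDerivAt_id r).sub_const s).const_mul (K + 1)).exp.const_mul ε).congr_deriv (by simp)
  have hB_pos : ∀ r, 0 < ε * exp ((K + 1) * (r - s)) := fun r => mul_pos hε (exp_pos _)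
  have fence := image_le_of_deriv_right_lt_deriv_boundary hd hd' (ha.trans (hB_pos a).le) hB
    (fun r hr hdr => by
      have hgrowth := hK r hr (hdr ▸ hB_pos r)
      rw [hdr] at hgrowth
      linarith [hB_pos r])
    hs
  simpa using fence

theorem le_of_hasDerivAt_logistic_le {c : ℝ} (hc : 0 ≤ c) {w y y' : ℝ → ℝ}
    (hw : ∀ t, 0 ≤ t → HasDerivAt w (c * w t * (1 - w t)) t)
    (hy : ∀ t, 0 ≤ t → HasDerivAt y (y' t) t) (hy_nonneg : ∀ t, 0 ≤ t → 0 ≤ y t)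
    (hy' : ∀ t, 0 ≤ t → c * y t * (1 - y t) ≤ y' t) (h0 : w 0 ≤ y 0) :
    ∀ t, 0 ≤ t → w t ≤ y t := by
  intro t ht
  have hd : ∀ s, 0 ≤ s → HasDerivAt (fun s => w s - y s) (c * w s * (1 - w s) - y' s) s :=
    fun s hs => (hw s hs).sub (hy s hs)
  have hdiff := nonpos_of_deriv_le_mul_of_pos (K := c)
    (fun s hs => (hd s hs.1).continuousAt.continuousWithinAt)
    (fun s hs => (hd s hs.1).hasDerivWithinAt) (sub_nonpos.2 h0)
    (fun s hs hpos => by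
      have hys := hy_nonneg s hs.1
      have hlog : c * w s * (1 - w s) - c * y s * (1 - y s)
          = c * (w s - y s) * (1 - w s - y s) := by ring
      have hsum : 0 ≤ w s + y s := by linarith
      nlinarith [hy' s hs.1, mul_nonneg (mul_nonneg hc hpos.le) hsum])
    t ⟨ht, le_rfl⟩
  exact sub_nonpos.1 hdiff

theorem logistic_le_trimorphic_growth {bS bF bD x y : ℝ} (hSD : bD ≤ bS) (hy : 0 ≤ y)
    (hxy : x ≤ 1 - y) :
    (bF - bS) * y * (1 - y) ≤ y * (bF * (1 - y) + bD * (x + y - 1) - bS * x) := by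
  have hgap : y * (bF * (1 - y) + bD * (x + y - 1) - bS * x) - (bF - bS) * y * (1 - y)
      = (bS - bD) * y * (1 - x - y) := by ring
  nlinarith [mul_nonneg (mul_nonneg (sub_nonneg.2 hSD) hy) (by linarith : (0 : ℝ) ≤ 1 - x - y)]

/-- Comparison lemma for the fast-replicator fraction: along the trimorphic within-protocell
dynamics, `dy/dt = y[b_F(1-y) + b_D(x+y-1) - b_S x] ≥ (b_F - b_S) y (1-y)` whenever
`0 ≤ y` and `0 ≤ x ≤ 1 - y`; consequently `y` dominates the solution `w` of the logistic
equation `dw/dt = (b_F - b_S) w (1-w)` with `w(0) = y(0)`. -/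
theorem stmt_8 (bS bF bD : ℝ) (hFS : bF > bS) (hSD : bS > bD)
    (x y w : ℝ → ℝ)
    (hrange : ∀ t : ℝ, 0 ≤ t → 0 ≤ y t ∧ 0 ≤ x t ∧ x t ≤ 1 - y t)
    (hy : ∀ t : ℝ, 0 ≤ t →
      HasDerivAt y (y t * (bF * (1 - y t) + bD * (x t + y t - 1) - bS * x t)) t)
    (hw : ∀ t : ℝ, 0 ≤ t → HasDerivAt w ((bF - bS) * w t * (1 - w t)) t)
    (hw0 : w 0 = y 0) :
    (∀ t : ℝ, 0 ≤ t →
      (bF - bS) * y t * (1 - y t)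
        ≤ y t * (bF * (1 - y t) + bD * (x t + y t - 1) - bS * x t)) ∧
    (∀ t : ℝ, 0 ≤ t → w t ≤ y t) := by
  have growth : ∀ t : ℝ, 0 ≤ t → (bF - bS) * y t * (1 - y t)
      ≤ y t * (bF * (1 - y t) + bD * (x t + y t - 1) - bS * x t) := fun t ht =>
    logistic_le_trimorphic_growth hSD.le (hrange t ht).1 (hrange t ht).2.2
  exact ⟨growth, le_of_hasDerivAt_logistic_le (sub_nonneg.2 hFS.le) hw hy
    (fun t ht => (hrange t ht).1) growth hw0.le⟩
end

section
/- Define λ*_FS(η) = sθ/(1-η) and λ*_FD(η) = (b_F - b_D)·2θ/(1 - η/2), where b_F - b_S = s and b_S - b_D > 0. Then λ*_FD(η) < λ*_FS(η) if and only if η > η_c, where η_c = [4(b_S - b_D) + 2(b_F - b_S)]/[4(b_S - b_D) + 3(b_F - b_S)]; moreover η_c ≥ 2/3 always, η_c → 1 as b_F → b_S (with b_S - b_D fixed positive), and η_c → 2/3 as b_F - b_S → ∞. -/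
open Filter Topology

theorem fastDimer_threshold_lt_fastSlow_threshold_iff {bS bF bD θ η : ℝ}
    (hden : 0 < 4*(bS - bD) + 3*(bF - bS)) (hθ : 0 < θ) (hη : η < 1) :
    (bF - bD) * 2 * θ / (1 - η/2) < (bF - bS) * θ / (1 - η) ↔
      (4*(bS - bD) + 2*(bF - bS)) / (4*(bS - bD) + 3*(bF - bS)) < η := by
  have hdiff : (bF - bS) * θ * (1 - η/2) - (bF - bD) * 2 * θ * (1 - η) =
      θ / 2 * (η * (4*(bS - bD) + 3*(bF - bS)) - (4*(bS - bD) + 2*(bF - bS))) := by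
    ring
  rw [div_lt_div_iff₀ (by linarith) (by linarith), div_lt_iff₀ hden, ← sub_pos, hdiff,
    mul_pos_iff_of_pos_left (by positivity), sub_pos]

theorem two_thirds_le_div {d s : ℝ} (hd : 0 ≤ d) (hden : 0 < 4*d + 3*s) :
    2/3 ≤ (4*d + 2*s) / (4*d + 3*s) := by
  rw [le_div_iff₀ hden]
  linarith

theorem tendsto_add_mul_sub_div_add_mul_sub_nhds {a c : ℝ} (ha : a ≠ 0) (p q : ℝ) :
    Tendsto (fun x : ℝ => (a + p*(x - c)) / (a + q*(x - c))) (𝓝 c) (𝓝 1) := by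
  have hcont : ContinuousAt (fun x : ℝ => (a + p*(x - c)) / (a + q*(x - c))) c :=
    ContinuousAt.div (by fun_prop) (by fun_prop) (by simpa using ha)
  simpa [div_self ha] using hcont.tendsto

theorem tendsto_add_mul_div_add_mul_atTop (a b p : ℝ) {q : ℝ} (hq : q ≠ 0) :
    Tendsto (fun s : ℝ => (a + p*s) / (b + q*s)) atTop (𝓝 (p/q)) := by
  have hlim (e r : ℝ) : Tendsto (fun s : ℝ => e * s⁻¹ + r) atTop (𝓝 r) := by
    simpa using (tendsto_inv_atTop_zero.const_mul e).add_const r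
  refine ((hlim a p).div (hlim b q) hq).congr' ?_
  filter_upwards [eventually_gt_atTop 0] with s hs
  simp only [Pi.div_apply]
  field_simp

theorem stmt_13_general (bS bF bD θ η : ℝ) (hFS : bF > bS) (hSD : bS > bD)
    (hθ : 0 < θ) (hη1 : η < 1) :
    ((bF - bD) * 2 * θ / (1 - η/2) < (bF - bS) * θ / (1 - η) ↔
      η > (4*(bS - bD) + 2*(bF - bS)) / (4*(bS - bD) + 3*(bF - bS))) ∧
    (2/3 ≤ (4*(bS - bD) + 2*(bF - bS)) / (4*(bS - bD) + 3*(bF - bS))) ∧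
    Tendsto (fun b : ℝ => (4*(bS - bD) + 2*(b - bS)) / (4*(bS - bD) + 3*(b - bS)))
      (𝓝 bS) (𝓝 1) ∧
    Tendsto (fun s : ℝ => (4*(bS - bD) + 2*s) / (4*(bS - bD) + 3*s))
      atTop (𝓝 (2/3)) := by
  have hden : 0 < 4*(bS - bD) + 3*(bF - bS) := by linarith
  exact ⟨fastDimer_threshold_lt_fastSlow_threshold_iff hden hθ hη1,
    two_thirds_le_div (by linarith) hden,
    tendsto_add_mul_sub_div_add_mul_sub_nhds (by linarith) 2 3,
    tendsto_add_mul_div_add_mul_atTop _ _ 2 (by norm_num)⟩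

/-- Comparison of coexistence thresholds `λ*_FS(η) = sθ/(1-η)` (with `s = b_F - b_S`) and
`λ*_FD(η) = (b_F - b_D)·2θ/(1 - η/2)`: `λ*_FD < λ*_FS` iff `η > η_c` where
`η_c = [4(b_S-b_D) + 2(b_F-b_S)]/[4(b_S-b_D) + 3(b_F-b_S)]`; moreover `η_c ≥ 2/3`,
`η_c → 1` as `b_F → b_S`, and `η_c → 2/3` as `b_F - b_S → ∞`. -/
theorem stmt_13 (bS bF bD θ η : ℝ) (hFS : bF > bS) (hSD : bS > bD)
    (hθ : 0 < θ) (hη0 : 0 ≤ η) (hη1 : η < 1) :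
    ((bF - bD) * 2 * θ / (1 - η/2) < (bF - bS) * θ / (1 - η) ↔
      η > (4*(bS - bD) + 2*(bF - bS)) / (4*(bS - bD) + 3*(bF - bS))) ∧
    (2/3 ≤ (4*(bS - bD) + 2*(bF - bS)) / (4*(bS - bD) + 3*(bF - bS))) ∧
    Tendsto (fun b : ℝ => (4*(bS - bD) + 2*(b - bS)) / (4*(bS - bD) + 3*(b - bS)))
      (𝓝 bS) (𝓝 1) ∧
    Tendsto (fun s : ℝ => (4*(bS - bD) + 2*s) / (4*(bS - bD) + 3*s))
      atTop (𝓝 (2/3)) :=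
  stmt_13_general bS bF bD θ η hFS hSD hθ hη1
end

section
/- Let b_S > b_D, θ ≥ 1, η > 2/3, and suppose λ(3η/2 - 1) > 2(b_S - b_D)(θ+1). Define ẑ(λ) = (1/(λη))·[λ(2η-1) - 4(b_S - b_D) - √((λ(2η-1) - 4(b_S-b_D))² - 2λη[λ(3η/2 - 1) - 2(b_S - b_D)(θ+1)])]. Then lim_{λ→∞} ẑ(λ) = 3 - 2/η, and for η ∈ (2/3, 1) this limit is strictly less than the maximizer 2 - 1/η of G_SD, with gap equal to 1/η - 1. -/
open Filter Topology

/-- Dividing by `x` and substituting `t = x⁻¹` turns the expression into a continuous function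
of `t` at `t = 0`. -/
theorem tendsto_sub_sqrt_div_atTop (a b c e : ℝ) :
    Tendsto (fun x : ℝ => (x*a - b - Real.sqrt ((x*a - b)^2 - x*(x*c - e))) / x)
      atTop (𝓝 (a - Real.sqrt (a^2 - c))) := by
  set g : ℝ → ℝ := fun t => a - b*t - Real.sqrt ((a - b*t)^2 - (c - e*t))
  have hg : Tendsto g (𝓝 0) (𝓝 (a - Real.sqrt (a^2 - c))) := by
    have : ContinuousAt g 0 := by fun_prop
    simpa [g] using this.tendsto
  refine (hg.comp tendsto_inv_atTop_zero).congr' ?_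
  filter_upwards [eventually_gt_atTop (0:ℝ)] with x hx
  have hsq : (x*a - b)^2 - x*(x*c - e) = x^2 * ((a - b*x⁻¹)^2 - (c - e*x⁻¹)) := by
    field_simp
  simp only [Function.comp_apply, g]
  rw [hsq, Real.sqrt_mul (sq_nonneg x), Real.sqrt_sq hx.le]
  field_simp

theorem stmt_16_general (bS bD θ η : ℝ) (hη : 2/3 < η) (hη1 : η ≤ 1) :
    Tendsto (fun lam : ℝ =>
      (1/(lam*η)) * (lam*(2*η - 1) - 4*(bS - bD)
        - Real.sqrt ((lam*(2*η - 1) - 4*(bS - bD))^2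
            - 2*lam*η*(lam*(3*η/2 - 1) - 2*(bS - bD)*(θ + 1)))))
      atTop (𝓝 (3 - 2/η)) ∧
    (η < 1 → 3 - 2/η < 2 - 1/η ∧ (2 - 1/η) - (3 - 2/η) = 1/η - 1) := by
  have hη0 : 0 < η := by linarith
  refine ⟨?_, fun hlt => ⟨?_, by ring⟩⟩
  · have hlim := (tendsto_sub_sqrt_div_atTop (2*η - 1) (4*(bS - bD)) (2*η*(3*η/2 - 1))
      (2*η*(2*(bS - bD)*(θ + 1)))).const_mul (1/η)
    have hdisc : (2*η - 1)^2 - 2*η*(3*η/2 - 1) = (1 - η)^2 := by ring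
    rw [hdisc, Real.sqrt_sq (by linarith)] at hlim
    convert hlim using 2 with lam
    · field_simp
    · field_simp
      ring
  · have : 1 < 1/η := by rw [lt_div_iff₀ hη0]; linarith
    linarith [show 2/η = 2*(1/η) by ring]

/-- The modal dimer fraction on the slow-dimer edge,
`ẑ(λ) = (1/(λη))[λ(2η-1) - 4(b_S-b_D) - √((λ(2η-1) - 4(b_S-b_D))² - 2λη[λ(3η/2-1) - 2(b_S-b_D)(θ+1)])]`,
tends to `3 - 2/η` as `λ → ∞`; for `η ∈ (2/3,1)` this limit is strictly less than the
maximizer `2 - 1/η` of `G_SD`, with gap `1/η - 1`. -/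
theorem stmt_16 (bS bD θ η : ℝ) (hb : bS > bD) (hθ : 1 ≤ θ) (hη : 2/3 < η) (hη1 : η ≤ 1) :
    Tendsto (fun lam : ℝ =>
      (1/(lam*η)) * (lam*(2*η - 1) - 4*(bS - bD)
        - Real.sqrt ((lam*(2*η - 1) - 4*(bS - bD))^2
            - 2*lam*η*(lam*(3*η/2 - 1) - 2*(bS - bD)*(θ + 1)))))
      atTop (𝓝 (3 - 2/η)) ∧
    (η < 1 → 3 - 2/η < 2 - 1/η ∧ (2 - 1/η) - (3 - 2/η) = 1/η - 1) :=
  stmt_16_general bS bD θ η hη hη1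
end
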